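/- arXiv:1609.05833 — 2 statements merged into one kernel-verified Lean document; each statement's English description precedes it below -/
import Mathlib

section
/- Let E be a real vector space and 𝒲 a nonempty collection of wedges in E that is closed under pairwise intersections (so that the intersection of any two wedges in 𝒲 again belongs to 𝒲). Suppose that every multi-bounded above family (x_1, W_1), (x_2, W_2) of two elements with W_1, W_2 ∈ 𝒲 has a multi-supremum. Then for every n ∈ ℕ, every multi-bounded above family (x_i, W_i)_{i=1,…,n} with all W_i ∈ 𝒲 has a multi-supremum. -/
/-- A wedge in a real vector space: a nonempty subset closed under addition
and multiplication by nonnegative scalars. -/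
def IsWedge {E : Type*} [AddCommGroup E] [Module ℝ E] (W : Set E) : Prop :=
  W.Nonempty ∧ (∀ x ∈ W, ∀ y ∈ W, x + y ∈ W) ∧ ∀ (c : ℝ), 0 ≤ c → ∀ x ∈ W, c • x ∈ W

/-- `u` is a multi-upper bound of the family `(x i, W i)`. -/
def IsMultiUpperBound {E ι : Type*} [AddCommGroup E] [Module ℝ E]
    (x : ι → E) (W : ι → Set E) (u : E) : Prop :=
  ∀ i, u - x i ∈ W i

/-- `z` is a multi-supremum of the family `(x i, W i)`. -/
def IsMultiSup {E ι : Type*} [AddCommGroup E] [Module ℝ E]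
    (x : ι → E) (W : ι → Set E) (z : E) : Prop :=
  IsMultiUpperBound x W z ∧ ∀ u, IsMultiUpperBound x W u → ∀ i, u - z ∈ W i

/-!
Induct on the length of the family. If `z` is a multi-supremum of the first `n` pairs and
`V = ⋂ Wᵢ` is their intersection (a member of `𝒲`), then a multi-upper bound of all `n + 1`
pairs is a multi-upper bound of the two pairs `(z, V), (xₙ, Wₙ)`, and by transitivity of each
`≤_{Wᵢ}` the multi-supremum of these two pairs is a multi-supremum of all `n + 1`. A single pair
`(x, W)` has the multi-supremum `x`, since `0 ∈ W`.
-/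

theorem Set.iInter_mem_of_inter_mem {α ι : Type*} [Fintype ι] [Nonempty ι] {𝒲 : Set (Set α)}
    (hinter : ∀ W₁ ∈ 𝒲, ∀ W₂ ∈ 𝒲, W₁ ∩ W₂ ∈ 𝒲) {W : ι → Set α} (hW : ∀ i, W i ∈ 𝒲) :
    ⋂ i, W i ∈ 𝒲 := by
  have := Finset.inf'_mem 𝒲 hinter Finset.univ Finset.univ_nonempty W fun i _ => hW i
  rwa [Finset.inf'_eq_inf, Finset.inf_univ_eq_iInf, Set.iInf_eq_iInter] at this

section Wedge

variable {E ι : Type*} [AddCommGroup E] [Module ℝ E]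

theorem IsWedge.zero_mem {W : Set E} (hW : IsWedge W) : (0 : E) ∈ W := by
  obtain ⟨⟨a, ha⟩, -, hsmul⟩ := hW
  simpa using hsmul 0 le_rfl a ha

theorem IsWedge.sub_mem_trans {W : Set E} (hW : IsWedge W) {a b c : E}
    (hab : b - a ∈ W) (hbc : c - b ∈ W) : c - a ∈ W := by
  simpa using hW.2.1 _ hbc _ hab

theorem isMultiSup_of_isEmpty [IsEmpty ι] (x : ι → E) (W : ι → Set E) (z : E) :
    IsMultiSup x W z :=
  ⟨isEmptyElim, fun _ _ => isEmptyElim⟩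

theorem isMultiSup_default [Unique ι] {x : ι → E} {W : ι → Set E} (h0 : (0 : E) ∈ W default) :
    IsMultiSup x W (x default) := by
  refine ⟨fun i => ?_, fun u hu i => ?_⟩ <;> rw [Unique.eq_default i]
  · simpa using h0
  · exact hu default

theorem IsMultiSup.sub_mem_iInter {x : ι → E} {W : ι → Set E} {z u : E}
    (hz : IsMultiSup x W z) (hu : IsMultiUpperBound x W u) : u - z ∈ ⋂ i, W i :=
  Set.mem_iInter.2 (hz.2 u hu)

section FinSucc

variable {n : ℕ} {x : Fin (n + 1) → E} {W : Fin (n + 1) → Set E} {z : E}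

theorem IsMultiSup.isMultiUpperBound_pair_iInter {u : E}
    (hz : IsMultiSup (x ∘ Fin.castSucc) (W ∘ Fin.castSucc) z) (hu : IsMultiUpperBound x W u) :
    IsMultiUpperBound ![z, x (Fin.last n)] ![⋂ i : Fin n, W i.castSucc, W (Fin.last n)] u :=
  Fin.forall_fin_two.2 ⟨hz.sub_mem_iInter fun i => hu i.castSucc, hu (Fin.last n)⟩

theorem IsMultiSup.of_pair_iInter (hW : ∀ i, IsWedge (W i))
    (hz : IsMultiSup (x ∘ Fin.castSucc) (W ∘ Fin.castSucc) z) {w : E}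
    (hw : IsMultiSup ![z, x (Fin.last n)] ![⋂ i : Fin n, W i.castSucc, W (Fin.last n)] w) :
    IsMultiSup x W w := by
  refine ⟨fun i => ?_, fun u hu i => ?_⟩
  · induction i using Fin.lastCases with
    | last => exact hw.1 1
    | cast i => exact (hW _).sub_mem_trans (hz.1 i) (Set.mem_iInter.1 (hw.1 0) i)
  · have huw := hw.2 u (hz.isMultiUpperBound_pair_iInter hu)
    induction i using Fin.lastCases with
    | last => exact huw 1
    | cast i => exact Set.mem_iInter.1 (huw 0) i

end FinSucc

theorem exists_isMultiSup_fin_succ {𝒲 : Set (Set E)} (h𝒲 : ∀ W ∈ 𝒲, IsWedge W)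
    (hinter : ∀ W₁ ∈ 𝒲, ∀ W₂ ∈ 𝒲, W₁ ∩ W₂ ∈ 𝒲)
    (h2 : ∀ (x : Fin 2 → E) (W : Fin 2 → Set E), (∀ i, W i ∈ 𝒲) →
      (∃ u, IsMultiUpperBound x W u) → ∃ z, IsMultiSup x W z) :
    ∀ (n : ℕ) (x : Fin (n + 1) → E) (W : Fin (n + 1) → Set E), (∀ i, W i ∈ 𝒲) →
      (∃ u, IsMultiUpperBound x W u) → ∃ z, IsMultiSup x W z := by
  intro n
  induction n with
  | zero => exact fun x W hW _ => ⟨x 0, isMultiSup_default (ι := Fin 1) (h𝒲 _ (hW 0)).zero_mem⟩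
  | succ n ih =>
    rintro x W hW ⟨u, hu⟩
    obtain ⟨z, hz⟩ := ih (x ∘ Fin.castSucc) (W ∘ Fin.castSucc) (fun i => hW _)
      ⟨u, fun i => hu i.castSucc⟩
    have hpair : ∀ i, ![⋂ i : Fin (n + 1), W i.castSucc, W (Fin.last _)] i ∈ 𝒲 :=
      Fin.forall_fin_two.2 ⟨Set.iInter_mem_of_inter_mem hinter fun i => hW _, hW _⟩
    obtain ⟨w, hw⟩ := h2 _ _ hpair ⟨u, hz.isMultiUpperBound_pair_iInter hu⟩
    exact ⟨w, hz.of_pair_iInter (fun i => h𝒲 _ (hW i)) hw⟩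

end Wedge

theorem stmt_5_general {E : Type*} [AddCommGroup E] [Module ℝ E]
    (𝒲 : Set (Set E)) (h𝒲 : ∀ W ∈ 𝒲, IsWedge W)
    (hinter : ∀ W₁ ∈ 𝒲, ∀ W₂ ∈ 𝒲, W₁ ∩ W₂ ∈ 𝒲)
    (h2 : ∀ (x : Fin 2 → E) (W : Fin 2 → Set E), (∀ i, W i ∈ 𝒲) →
      (∃ u, IsMultiUpperBound x W u) → ∃ z, IsMultiSup x W z) :
    ∀ (n : ℕ) (x : Fin n → E) (W : Fin n → Set E), (∀ i, W i ∈ 𝒲) →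
      (∃ u, IsMultiUpperBound x W u) → ∃ z, IsMultiSup x W z := by
  rintro (_ | n) x W
  · exact fun _ _ => ⟨0, isMultiSup_of_isEmpty x W 0⟩
  · exact exists_isMultiSup_fin_succ h𝒲 hinter h2 n x W

theorem stmt_5 {E : Type*} [AddCommGroup E] [Module ℝ E]
    (𝒲 : Set (Set E)) (h𝒲ne : 𝒲.Nonempty) (h𝒲 : ∀ W ∈ 𝒲, IsWedge W)
    (hinter : ∀ W₁ ∈ 𝒲, ∀ W₂ ∈ 𝒲, W₁ ∩ W₂ ∈ 𝒲)
    (h2 : ∀ (x : Fin 2 → E) (W : Fin 2 → Set E), (∀ i, W i ∈ 𝒲) →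
      (∃ u, IsMultiUpperBound x W u) → ∃ z, IsMultiSup x W z) :
    ∀ (n : ℕ) (x : Fin n → E) (W : Fin n → Set E), (∀ i, W i ∈ 𝒲) →
      (∃ u, IsMultiUpperBound x W u) → ∃ z, IsMultiSup x W z :=
  stmt_5_general 𝒲 h𝒲 hinter h2
end

section
/- Let E and V be real vector spaces, W a wedge in E, and T : W → V a map that is additive (T(x + y) = T(x) + T(y) for all x, y ∈ W) and positively homogeneous (T(λ·x) = λ·T(x) for all x ∈ W and real λ ≥ 0). Then there exists a linear map S : E → V with S(x) = T(x) for all x ∈ W. -/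
/-!
The graph `{(x, T x) | x ∈ W}` of `T` is again a wedge, in `E × V`, so its linear span consists
of differences `(x, T x) - (y, T y)` with `x, y ∈ W`. Such a difference has first coordinate `0`
only if `x = y`, so the span is the graph of a linear map on a subspace of `E`; any linear
extension of that map to all of `E` agrees with `T` on `W`.
-/

namespace Submodule

variable {K E V : Type*} [DivisionRing K] [AddCommGroup E] [Module K E] [AddCommGroup V]
  [Module K V]

theorem exists_linearMap_of_isGraph (G : Submodule K (E × V))
    (hG : ∀ p ∈ G, p.1 = 0 → p.2 = 0) : ∃ S : E →ₗ[K] V, ∀ p ∈ G, S p.1 = p.2 := by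
  obtain ⟨S, hS⟩ := G.toLinearPMap.toFun.exists_extend
  refine ⟨S, fun p hp => ?_⟩
  rw [← toLinearPMap_graph_eq G hG, LinearPMap.mem_graph_iff] at hp
  obtain ⟨y, hy₁, hy₂⟩ := hp
  rw [← hy₁, ← hy₂]
  exact LinearMap.congr_fun hS y

end Submodule

namespace IsWedge

variable {E V : Type*} [AddCommGroup E] [Module ℝ E] [AddCommGroup V] [Module ℝ V]
  {W : Set E}

theorem zero_mem_s11 (hW : IsWedge W) : (0 : E) ∈ W := by
  obtain ⟨x, hx⟩ := hW.1
  simpa using hW.2.2 0 le_rfl x hx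

theorem exists_sub_eq_of_mem_span (hW : IsWedge W) {z : E} (hz : z ∈ Submodule.span ℝ W) :
    ∃ x ∈ W, ∃ y ∈ W, x - y = z := by
  have h0 := hW.zero_mem_s11
  obtain ⟨-, hadd, hsmul⟩ := hW
  induction hz using Submodule.span_induction with
  | mem x hx => exact ⟨x, hx, 0, h0, sub_zero x⟩
  | zero => exact ⟨0, h0, 0, h0, sub_zero 0⟩
  | add _ _ _ _ h h' =>
    obtain ⟨x, hx, y, hy, rfl⟩ := h
    obtain ⟨x', hx', y', hy', rfl⟩ := h'
    exact ⟨x + x', hadd x hx x' hx', y + y', hadd y hy y' hy', add_sub_add_comm x x' y y'⟩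
  | smul c _ _ h =>
    obtain ⟨x, hx, y, hy, rfl⟩ := h
    rcases le_total 0 c with hc | hc
    · exact ⟨c • x, hsmul c hc x hx, c • y, hsmul c hc y hy, (smul_sub c x y).symm⟩
    · refine ⟨(-c) • y, hsmul (-c) (neg_nonneg.2 hc) y hy,
        (-c) • x, hsmul (-c) (neg_nonneg.2 hc) x hx, ?_⟩
      rw [← smul_sub, neg_smul, ← smul_neg, neg_sub]

theorem image_graph (hW : IsWedge W) {T : E → V}
    (hadd : ∀ x ∈ W, ∀ y ∈ W, T (x + y) = T x + T y)
    (hpos : ∀ (c : ℝ), 0 ≤ c → ∀ x ∈ W, T (c • x) = c • T x) :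
    IsWedge ((fun x => (x, T x)) '' W) := by
  obtain ⟨hne, hWadd, hWsmul⟩ := hW
  refine ⟨hne.image _, ?_, ?_⟩
  · rintro _ ⟨x, hx, rfl⟩ _ ⟨y, hy, rfl⟩
    exact ⟨x + y, hWadd x hx y hy, by simp only [hadd x hx y hy, Prod.mk_add_mk]⟩
  · rintro c hc _ ⟨x, hx, rfl⟩
    exact ⟨c • x, hWsmul c hc x hx, by simp only [hpos c hc x hx, Prod.smul_mk]⟩

end IsWedge

theorem stmt_11 {E V : Type*} [AddCommGroup E] [Module ℝ E] [AddCommGroup V] [Module ℝ V]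
    (W : Set E) (hW : IsWedge W) (T : E → V)
    (hadd : ∀ x ∈ W, ∀ y ∈ W, T (x + y) = T x + T y)
    (hpos : ∀ (c : ℝ), 0 ≤ c → ∀ x ∈ W, T (c • x) = c • T x) :
    ∃ S : E →ₗ[ℝ] V, ∀ x ∈ W, S x = T x := by
  set G := Submodule.span ℝ ((fun x => (x, T x)) '' W)
  have hG : ∀ p ∈ G, p.1 = 0 → p.2 = 0 := by
    intro p hp hp₁
    obtain ⟨_, ⟨x, hx, rfl⟩, _, ⟨y, hy, rfl⟩, rfl⟩ :=
      (hW.image_graph hadd hpos).exists_sub_eq_of_mem_span hp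
    obtain rfl : x = y := sub_eq_zero.1 hp₁
    exact sub_self _
  obtain ⟨S, hS⟩ := G.exists_linearMap_of_isGraph hG
  exact ⟨S, fun x hx => hS (x, T x) (Submodule.subset_span ⟨x, hx, rfl⟩)⟩
end
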